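/- Suppose B(x,t,λ) = (λ - a)I + (1/2)[[-iΩ, i(ũ - u)], [i·conj(ũ - u), iΩ]] with Ω = √(4b² - |u - ũ|²) satisfies the t-part gauge equation B_t = VB - BṼ for all λ, where V, Ṽ are the NLS temporal Lax matrices of u and ũ. Then u_t - ũ_t = 2a(u_x - ũ_x) - iΩ(ũ_x + u_x) + i(u - ũ)(|u|² + |ũ|²). -/
import Mathlib


open Complex Matrix

/-- The temporal Lax matrix `V` of the NLS equation. -/
def laxV (u ux lam : ℂ) : Matrix (Fin 2) (Fin 2) ℂ :=
  !![-2 * Complex.I * lam ^ 2 + Complex.I * (u * (starRingEnd ℂ) u),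
      2 * lam * u + Complex.I * ux;
      -2 * lam * (starRingEnd ℂ) u + Complex.I * (starRingEnd ℂ) ux,
      2 * Complex.I * lam ^ 2 - Complex.I * (u * (starRingEnd ℂ) u)]

/-- The Bäcklund matrix `B = (λ - a) I + (1/2)[[-iΩ, i(ũ-u)], [i conj(ũ-u), iΩ]]`. -/
noncomputable def backlundB (a : ℝ) (u v Ω lam : ℂ) : Matrix (Fin 2) (Fin 2) ℂ :=
  (lam - (a : ℂ)) • (1 : Matrix (Fin 2) (Fin 2) ℂ)
    + (1 / 2 : ℂ) • !![-Complex.I * Ω, Complex.I * (v - u);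
        Complex.I * (starRingEnd ℂ) (v - u), Complex.I * Ω]

private lemma stmt5_aux (a : ℝ) (U V UX VX UT VT OT : ℂ)
    (h : ((Complex.I / 2) * (VT - UT))
       = (laxV U UX 0 * backlundB a U V OT 0 - backlundB a U V OT 0 * laxV V VX 0) 0 1) :
    UT - VT = 2 * (a:ℂ) * (UX - VX) - Complex.I * OT * (VX + UX)
      + Complex.I * (U - V) * (U * (starRingEnd ℂ) U + V * (starRingEnd ℂ) V) := by
  simp only [laxV, backlundB, Matrix.sub_apply, Matrix.mul_apply, Fin.sum_univ_two,
    Matrix.add_apply, Matrix.smul_apply, Matrix.one_apply, Matrix.cons_val', Matrix.cons_val_zero,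
    Matrix.cons_val_one, Matrix.head_cons, Matrix.empty_val', Matrix.cons_val_fin_one,
    Matrix.head_fin_const, smul_eq_mul] at h
  norm_num at h
  linear_combination (2*Complex.I) * h
    + ((UT - VT - 2*(a:ℂ)*(UX - VX))
       + (OT*(UX+VX) - (U-V)*(U*(starRingEnd ℂ) U + V*(starRingEnd ℂ) V)) * Complex.I)
      * Complex.I_sq

/-- if the Bäcklund matrix `B` with `Ω = √(4b² - |u - ũ|²)` satisfies the
`t`-part gauge equation `B_t = V B - B Ṽ` for all `λ`, then
`u_t - ũ_t = 2a(u_x - ũ_x) - iΩ(ũ_x + u_x) + i(u - ũ)(|u|² + |ũ|²)`. -/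
theorem stmt_5 (a b : ℝ) (u v ux vx ut vt : ℝ → ℝ → ℂ) (Ωt : ℝ → ℝ → ℝ)
    (hbound : ∀ x t, Complex.normSq (u x t - v x t) ≤ 4 * b ^ 2)
    (hux : ∀ x t, HasDerivAt (fun y => u y t) (ux x t) x)
    (hvx : ∀ x t, HasDerivAt (fun y => v y t) (vx x t) x)
    (hut : ∀ x t, HasDerivAt (fun s => u x s) (ut x t) t)
    (hvt : ∀ x t, HasDerivAt (fun s => v x s) (vt x t) t)
    (hΩt : ∀ x t, HasDerivAt
      (fun s => Real.sqrt (4 * b ^ 2 - Complex.normSq (u x s - v x s))) (Ωt x t) t)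
    -- the t-part gauge equation B_t = V B - B Ṽ, for all λ
    (hgauge : ∀ (lam : ℂ) (x t : ℝ),
      (!![-(Complex.I / 2) * (Ωt x t : ℂ), (Complex.I / 2) * (vt x t - ut x t);
          (Complex.I / 2) * (starRingEnd ℂ) (vt x t - ut x t),
          (Complex.I / 2) * (Ωt x t : ℂ)] : Matrix (Fin 2) (Fin 2) ℂ)
        = laxV (u x t) (ux x t) lam
            * backlundB a (u x t) (v x t)
                ((Real.sqrt (4 * b ^ 2 - Complex.normSq (u x t - v x t)) : ℝ) : ℂ) lam
          - backlundB a (u x t) (v x t)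
                ((Real.sqrt (4 * b ^ 2 - Complex.normSq (u x t - v x t)) : ℝ) : ℂ) lam
            * laxV (v x t) (vx x t) lam) :
    ∀ x t, ut x t - vt x t
      = 2 * (a : ℂ) * (ux x t - vx x t)
        - Complex.I * ((Real.sqrt (4 * b ^ 2 - Complex.normSq (u x t - v x t)) : ℝ) : ℂ)
            * (vx x t + ux x t)
        + Complex.I * (u x t - v x t)
            * ((Complex.normSq (u x t) : ℂ) + (Complex.normSq (v x t) : ℂ)) := by
  intro x t
  have h := congrFun (congrFun (hgauge 0 x t) 0) 1
  have key := stmt5_aux a (u x t) (v x t) (ux x t) (vx x t) (ut x t) (vt x t)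
    ((Real.sqrt (4 * b ^ 2 - Complex.normSq (u x t - v x t)) : ℝ) : ℂ) (by
      rw [← hgauge 0 x t]
      simp)
  rw [key, Complex.mul_conj, Complex.mul_conj]
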